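/- arXiv:math/0608142 — 2 statements merged into one kernel-verified Lean document; each statement's English description precedes it below -/
import Mathlib

section
/- Let ξ be obtained from η ∈ ℕ^{ℕ₊} via the map T (particle n at position p(n) = ∑_{z=1}^n η(z) + n). Then for every n ≥ 1: ∑_{x=1}^{n} ξ(x) + ∑_{y=1}^{S(n)} η(y) ≤ n ≤ ∑_{x=1}^{n} ξ(x) + ∑_{y=1}^{S(n)+1} η(y), where S(n) = ∑_{x=1}^{n} ξ(x). -/
open Classical

/-- Position of the n-th particle: p(n) = ∑_{z=1}^n η(z) + n. -/
def particlePos (η : ℕ → ℕ) (n : ℕ) : ℕ := (∑ z ∈ Finset.Icc 1 n, η z) + n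

/-- The exclusion configuration associated to η: indicator of the range of `particlePos`. -/
noncomputable def zrToExc (η : ℕ → ℕ) (x : ℕ) : ℕ :=
  if ∃ n : ℕ, 1 ≤ n ∧ x = particlePos η n then 1 else 0

/-!
If `k` is the number of particles in `{1, …, n}`, then `n` lies between the `k`-th and the
`(k+1)`-st particle: `p(k) ≤ n < p(k+1)`. Since `p(k) = ∑_{y ≤ k} η(y) + k`, these two
inequalities are exactly the claim with `S(n) = k`.
-/

open Finset

namespace Nat

theorem exists_le_lt_succ_of_strictMono {f : ℕ → ℕ} (hf : StrictMono f) {n : ℕ}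
    (h0 : f 0 ≤ n) : ∃ k, f k ≤ n ∧ n < f (k + 1) := by
  have hex : ∃ k, n < f (k + 1) := ⟨n, (hf.id_le (n + 1)).trans_lt' (lt_add_one n)⟩
  refine ⟨Nat.find hex, ?_, Nat.find_spec hex⟩
  rcases hk : Nat.find hex with _ | j
  · exact h0
  · exact not_lt.mp (Nat.find_min hex (hk ▸ lt_add_one j))

theorem card_filter_mem_range_of_strictMono {f : ℕ → ℕ} (hf : StrictMono f) {n k : ℕ}
    (hk : f k ≤ n) (hk' : n < f (k + 1)) :
    #{x ∈ Icc 1 n | ∃ m, 1 ≤ m ∧ x = f m} = k := by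
  have himage : (Icc 1 k).image f = {x ∈ Icc 1 n | ∃ m, 1 ≤ m ∧ x = f m} := by
    ext x
    simp only [mem_image, mem_filter, mem_Icc]
    constructor
    · rintro ⟨m, ⟨hm1, hmk⟩, rfl⟩
      exact ⟨⟨hm1.trans (hf.id_le m), (hf.monotone hmk).trans hk⟩, m, hm1, rfl⟩
    · rintro ⟨⟨-, hxn⟩, m, hm1, rfl⟩
      exact ⟨m, ⟨hm1, Nat.lt_succ_iff.mp (hf.lt_iff_lt.mp (hxn.trans_lt hk'))⟩, rfl⟩
  rw [← himage, Finset.card_image_of_injective _ hf.injective, Nat.card_Icc, Nat.add_sub_cancel]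

end Nat

theorem particlePos_strictMono (η : ℕ → ℕ) : StrictMono (particlePos η) := by
  intro a b hab
  have hsum : ∑ z ∈ Icc 1 a, η z ≤ ∑ z ∈ Icc 1 b, η z :=
    sum_le_sum_of_subset (Icc_subset_Icc_right hab.le)
  unfold particlePos
  omega

theorem sum_zrToExc_Icc_eq {η : ℕ → ℕ} {n k : ℕ} (hk : particlePos η k ≤ n)
    (hk' : n < particlePos η (k + 1)) : ∑ x ∈ Icc 1 n, zrToExc η x = k := by
  simp only [zrToExc, sum_boole, Nat.cast_id]
  exact Nat.card_filter_mem_range_of_strictMono (particlePos_strictMono η) hk hk'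

theorem stmt_3_general (η : ℕ → ℕ) (n : ℕ) :
    (∑ x ∈ Finset.Icc 1 n, zrToExc η x)
        + ∑ y ∈ Finset.Icc 1 (∑ x ∈ Finset.Icc 1 n, zrToExc η x), η y ≤ n ∧
    n ≤ (∑ x ∈ Finset.Icc 1 n, zrToExc η x)
        + ∑ y ∈ Finset.Icc 1 ((∑ x ∈ Finset.Icc 1 n, zrToExc η x) + 1), η y := by
  obtain ⟨k, hk, hk'⟩ :=
    Nat.exists_le_lt_succ_of_strictMono (particlePos_strictMono η) (n := n) (by simp [particlePos])
  rw [sum_zrToExc_Icc_eq hk hk']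
  unfold particlePos at hk hk'
  omega

/-- With S(n) = ∑_{x=1}^n ξ(x):
S(n) + ∑_{y=1}^{S(n)} η(y) ≤ n ≤ S(n) + ∑_{y=1}^{S(n)+1} η(y). -/
theorem stmt_3 (η : ℕ → ℕ) (n : ℕ) (hn : 1 ≤ n) :
    (∑ x ∈ Finset.Icc 1 n, zrToExc η x)
        + ∑ y ∈ Finset.Icc 1 (∑ x ∈ Finset.Icc 1 n, zrToExc η x), η y ≤ n ∧
    n ≤ (∑ x ∈ Finset.Icc 1 n, zrToExc η x)
        + ∑ y ∈ Finset.Icc 1 ((∑ x ∈ Finset.Icc 1 n, zrToExc η x) + 1), η y :=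
  stmt_3_general η n
end

section
/- If μ is absolutely continuous with respect to ν with density dμ/dν, then the relative entropy H(μ|ν) = sup_f { ∫ f dμ - log ∫ e^f dν } (supremum over bounded measurable f) equals ∫ log(dμ/dν) dμ. -/
open MeasureTheory Classical

/-- The relative entropy H(μ|ν), defined by the variational formula as a supremum
over bounded measurable functions, valued in the extended reals. -/
noncomputable def relEnt {Ω : Type*} [MeasurableSpace Ω] (μ ν : Measure Ω) : EReal :=
  ⨆ f : {f : Ω → ℝ // Measurable f ∧ ∃ C : ℝ, ∀ x, |f x| ≤ C},
    ((∫ x, f.1 x ∂μ - Real.log (∫ x, Real.exp (f.1 x) ∂ν) : ℝ) : EReal)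

/-! Donsker–Varadhan. For bounded `f`, tilting `ν` by `f` gives a probability measure `ν_f` with
`0 ≤ KL(μ ‖ ν_f) = ∫ llr μ ν ∂μ - ∫ f ∂μ + log ∫ exp f ∂ν`, which bounds `relEnt μ ν` from above.
Conversely, the logarithm of `dμ/dν` clipped to `[exp (-n), exp n]` is a bounded test function
with value at least `∫ min n (llr μ ν) ∂μ - log (1 + exp (-n))`. By monotone convergence this
tends to `∫ llr μ ν ∂μ`, or to `+∞` when `llr μ ν` is not integrable: its negative part always is,
since `x log x ≥ -1`. -/

open Real Filter Topology

lemma EReal.tendsto_coe_sub_of_tendsto_zero {ι : Type*} {l : Filter ι} {a c : ι → ℝ} {x : EReal}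
    (ha : Tendsto (fun i ↦ (a i : EReal)) l (𝓝 x)) (hc : Tendsto c l (𝓝 0)) :
    Tendsto (fun i ↦ ((a i - c i : ℝ) : EReal)) l (𝓝 x) := by
  have hc' : Tendsto (fun i ↦ ((-c i : ℝ) : EReal)) l (𝓝 0) :=
    (continuous_coe_real_ereal.tendsto 0).comp (by simpa using hc.neg)
  simpa [sub_eq_add_neg, Function.comp_def] using
    (EReal.continuousAt_add (p := (x, 0)) (by simp) (by simp)).tendsto.comp (ha.prodMk_nhds hc')

namespace MeasureTheory

variable {α : Type*} [MeasurableSpace α] {μ ν : Measure α}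

lemma tendsto_integral_atTop_of_monotone_of_not_integrable {f : ℕ → α → ℝ} {F : α → ℝ}
    (hf : ∀ n, Integrable (f n) μ) (hF : AEStronglyMeasurable F μ) (hF_int : ¬ Integrable F μ)
    (h_mono : ∀ᵐ x ∂μ, Monotone fun n ↦ f n x)
    (h_tendsto : ∀ᵐ x ∂μ, Tendsto (fun n ↦ f n x) atTop (𝓝 (F x))) :
    Tendsto (fun n ↦ ∫ x, f n x ∂μ) atTop atTop := by
  have hg_nonneg : ∀ n, 0 ≤ᵐ[μ] fun x ↦ f n x - f 0 x := fun n ↦ by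
    filter_upwards [h_mono] with x hx using sub_nonneg.2 (hx n.zero_le)
  have hG_nonneg : 0 ≤ᵐ[μ] fun x ↦ F x - f 0 x := by
    filter_upwards [h_mono, h_tendsto] with x hx_mono hx_tendsto
    exact sub_nonneg.2 (ge_of_tendsto' hx_tendsto fun n ↦ hx_mono n.zero_le)
  -- monotone convergence for the nonnegative increments `f n - f 0`
  have h_lim : Tendsto (fun n ↦ ∫⁻ x, ENNReal.ofReal (f n x - f 0 x) ∂μ) atTop
      (𝓝 (∫⁻ x, ENNReal.ofReal (F x - f 0 x) ∂μ)) := by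
    refine lintegral_tendsto_of_tendsto_of_monotone
      (fun n ↦ ((hf n).sub (hf 0)).aemeasurable.ennreal_ofReal) ?_ ?_
    · filter_upwards [h_mono] with x hx n m hnm
      exact ENNReal.ofReal_le_ofReal (sub_le_sub_right (hx hnm) _)
    · filter_upwards [h_tendsto] with x hx
      exact (ENNReal.continuous_ofReal.tendsto _).comp (hx.sub_const _)
  have h_top : ∫⁻ x, ENNReal.ofReal (F x - f 0 x) ∂μ = ⊤ := by
    by_contra h
    have hG : Integrable (fun x ↦ F x - f 0 x) μ :=
      ⟨hF.sub (hf 0).1, (hasFiniteIntegral_iff_ofReal hG_nonneg).2 (lt_top_iff_ne_top.2 h)⟩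
    exact hF_int ((hG.add (hf 0)).congr (ae_of_all _ fun x ↦ sub_add_cancel _ _))
  rw [h_top] at h_lim
  have h_eq : ∀ n, ∫⁻ x, ENNReal.ofReal (f n x - f 0 x) ∂μ
      = ENNReal.ofReal (∫ x, f n x ∂μ - ∫ x, f 0 x ∂μ) := fun n ↦ by
    rw [← integral_sub (hf n) (hf 0)]
    exact (ofReal_integral_eq_lintegral_ofReal ((hf n).sub (hf 0)) (hg_nonneg n)).symm
  simp_rw [h_eq, ENNReal.tendsto_ofReal_nhds_top] at h_lim
  simpa using h_lim.atTop_add (tendsto_const_nhds (x := ∫ x, f 0 x ∂μ))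

-- Clipping before the logarithm sends `r = 0` to `-n`, not to the junk value `log 0 = 0`.
noncomputable def truncLog (n r : ℝ) : ℝ := log (max (exp (-n)) (min (exp n) r))

lemma measurable_truncLog (n : ℝ) : Measurable (truncLog n) := by
  unfold truncLog; fun_prop

lemma exp_truncLog (n r : ℝ) : exp (truncLog n r) = max (exp (-n)) (min (exp n) r) :=
  exp_log (lt_max_of_lt_left (exp_pos _))

lemma abs_truncLog_le {n : ℝ} (hn : 0 ≤ n) (r : ℝ) : |truncLog n r| ≤ n := by
  have h_lower : exp (-n) ≤ exp (truncLog n r) := by rw [exp_truncLog]; exact le_max_left _ _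
  have h_upper : exp (truncLog n r) ≤ exp n := by
    rw [exp_truncLog]; exact max_le (exp_le_exp.2 (by linarith)) (min_le_left _ _)
  rw [exp_le_exp] at h_lower h_upper
  exact abs_le.2 ⟨h_lower, h_upper⟩

lemma exp_truncLog_le (n : ℝ) {r : ℝ} (hr : 0 ≤ r) : exp (truncLog n r) ≤ r + exp (-n) := by
  rw [exp_truncLog]
  exact max_le (le_add_of_nonneg_left hr)
    ((min_le_right _ _).trans (le_add_of_nonneg_right (exp_pos _).le))

lemma min_log_le_truncLog (n : ℝ) {r : ℝ} (hr : 0 < r) : min n (log r) ≤ truncLog n r := by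
  calc min n (log r) ≤ log (min (exp n) r) := by
        rcases min_cases (exp n) r with ⟨h, -⟩ | ⟨h, -⟩
        · rw [h, log_exp]; exact min_le_left _ _
        · rw [h]; exact min_le_right _ _
    _ ≤ truncLog n r := log_le_log (lt_min (exp_pos n) hr) (le_max_right _ _)

lemma integrable_min_llr_zero [SigmaFinite μ] [μ.HaveLebesgueDecomposition ν] [IsFiniteMeasure ν]
    (hμν : μ ≪ ν) : Integrable (fun x ↦ min (llr μ ν x) 0) μ := by
  rw [← integrable_toReal_rnDeriv_mul_iff hμν]
  refine Integrable.of_bound (by fun_prop) 1 (ae_of_all _ fun x ↦ ?_)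
  set r := (μ.rnDeriv ν x).toReal
  have hr : 0 ≤ r := ENNReal.toReal_nonneg
  have h_lower : r - 1 ≤ r * log r := self_sub_one_le_mul_log hr
  rw [llr_def, mul_min_of_nonneg _ _ hr, mul_zero, Real.norm_eq_abs, abs_le]
  constructor
  · rcases min_cases (r * log r) 0 with ⟨h, -⟩ | ⟨h, -⟩ <;> rw [h] <;> linarith
  · exact (min_le_right _ _).trans zero_le_one

lemma integrable_min_llr [IsFiniteMeasure μ] [μ.HaveLebesgueDecomposition ν] [IsFiniteMeasure ν]
    (hμν : μ ≪ ν) {n : ℝ} (hn : 0 ≤ n) : Integrable (fun x ↦ min n (llr μ ν x)) μ :=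
  integrable_of_le_of_le (by fun_prop)
    (ae_of_all _ fun x ↦ le_min_iff.2 ⟨(min_le_right _ _).trans hn, min_le_left _ _⟩)
    (ae_of_all _ fun x ↦ min_le_left _ _) (integrable_min_llr_zero hμν) (integrable_const n)

lemma integral_sub_log_integral_exp_le_integral_llr [IsProbabilityMeasure μ]
    [IsProbabilityMeasure ν] (hμν : μ ≪ ν) {f : α → ℝ} (hfμ : Integrable f μ)
    (hfν : Integrable (fun x ↦ exp (f x)) ν) (h_int : Integrable (llr μ ν) μ) :
    ∫ x, f x ∂μ - log (∫ x, exp (f x) ∂ν) ≤ ∫ x, llr μ ν x ∂μ := by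
  have := isProbabilityMeasure_tilted hfν
  have h_nonneg := InformationTheory.integral_llr_add_sub_measure_univ_nonneg
    (hμν.trans (absolutelyContinuous_tilted hfν)) (integrable_llr_tilted_right hμν hfμ h_int hfν)
  rw [integral_llr_tilted_right hμν hfμ hfν h_int] at h_nonneg
  simp only [probReal_univ] at h_nonneg
  linarith

lemma tendsto_integral_min_llr [IsFiniteMeasure μ] [μ.HaveLebesgueDecomposition ν]
    [IsFiniteMeasure ν] (hμν : μ ≪ ν) :
    Tendsto (fun n : ℕ ↦ ((∫ x, min (n : ℝ) (llr μ ν x) ∂μ : ℝ) : EReal)) atTop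
      (𝓝 (if Integrable (llr μ ν) μ then ((∫ x, llr μ ν x ∂μ : ℝ) : EReal) else ⊤)) := by
  have h_int (n : ℕ) : Integrable (fun x ↦ min (n : ℝ) (llr μ ν x)) μ :=
    integrable_min_llr hμν n.cast_nonneg
  have h_mono : ∀ᵐ x ∂μ, Monotone fun n : ℕ ↦ min (n : ℝ) (llr μ ν x) :=
    ae_of_all _ fun x n m hnm ↦ min_le_min_right _ (Nat.cast_le.2 hnm)
  have h_tendsto : ∀ᵐ x ∂μ, Tendsto (fun n : ℕ ↦ min (n : ℝ) (llr μ ν x)) atTop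
      (𝓝 (llr μ ν x)) :=
    ae_of_all _ fun x ↦ tendsto_nhds_of_eventually_eq
      ((tendsto_natCast_atTop_atTop.eventually_ge_atTop (llr μ ν x)).mono fun n hn ↦
        min_eq_right hn)
  split_ifs with h
  · exact (continuous_coe_real_ereal.tendsto _).comp
      (integral_tendsto_of_tendsto_of_monotone h_int h h_mono h_tendsto)
  · exact EReal.tendsto_coe_nhds_top_iff.2 (tendsto_integral_atTop_of_monotone_of_not_integrable
      h_int (measurable_llr μ ν).aestronglyMeasurable h h_mono h_tendsto)

end MeasureTheory

section RelativeEntropy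

variable {Ω : Type*} [MeasurableSpace Ω] {μ ν : Measure Ω}

lemma le_relEnt {f : Ω → ℝ} (hf : Measurable f) {C : ℝ} (hC : ∀ x, |f x| ≤ C) :
    ((∫ x, f x ∂μ - log (∫ x, exp (f x) ∂ν) : ℝ) : EReal) ≤ relEnt μ ν :=
  le_iSup_of_le (⟨f, hf, C, hC⟩ : {f : Ω → ℝ // Measurable f ∧ ∃ C : ℝ, ∀ x, |f x| ≤ C}) le_rfl

lemma relEnt_le_integral_llr [IsProbabilityMeasure μ] [IsProbabilityMeasure ν] (hμν : μ ≪ ν)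
    (h_int : Integrable (llr μ ν) μ) : relEnt μ ν ≤ ((∫ x, llr μ ν x ∂μ : ℝ) : EReal) := by
  refine iSup_le fun ⟨f, hf, C, hC⟩ ↦ EReal.coe_le_coe_iff.2 ?_
  refine integral_sub_log_integral_exp_le_integral_llr hμν
    (Integrable.of_bound hf.aestronglyMeasurable C (ae_of_all _ hC)) ?_ h_int
  refine Integrable.of_bound hf.exp.aestronglyMeasurable (exp C) (ae_of_all _ fun x ↦ ?_)
  rw [Real.norm_eq_abs, abs_exp, exp_le_exp]
  exact (le_abs_self _).trans (hC x)

-- Witness: the test function `truncLog n (dμ/dν)`, whose exponential has `ν`-integral at most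
-- `1 + exp (-n)`.
lemma integral_min_llr_sub_le_relEnt [IsProbabilityMeasure μ] [IsProbabilityMeasure ν]
    (hμν : μ ≪ ν) {n : ℝ} (hn : 0 ≤ n) :
    ((∫ x, min n (llr μ ν x) ∂μ - log (1 + exp (-n)) : ℝ) : EReal) ≤ relEnt μ ν := by
  set f : Ω → ℝ := fun x ↦ truncLog n (μ.rnDeriv ν x).toReal
  have hf : Measurable f := (measurable_truncLog n).comp (μ.measurable_rnDeriv ν).ennreal_toReal
  have hfC : ∀ x, |f x| ≤ n := fun x ↦ abs_truncLog_le hn _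
  have hfμ : Integrable f μ := Integrable.of_bound hf.aestronglyMeasurable n (ae_of_all _ hfC)
  have h_exp : Integrable (fun x ↦ exp (f x)) ν := by
    refine Integrable.of_bound hf.exp.aestronglyMeasurable (exp n) (ae_of_all _ fun x ↦ ?_)
    rw [Real.norm_eq_abs, abs_exp, exp_le_exp]
    exact (le_abs_self _).trans (hfC x)
  have hZ_le : ∫ x, exp (f x) ∂ν ≤ 1 + exp (-n) := by
    calc ∫ x, exp (f x) ∂ν ≤ ∫ x, ((μ.rnDeriv ν x).toReal + exp (-n)) ∂ν :=
          integral_mono h_exp (Measure.integrable_toReal_rnDeriv.add (integrable_const _))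
            fun x ↦ exp_truncLog_le n ENNReal.toReal_nonneg
      _ = 1 + exp (-n) := by
          rw [integral_add Measure.integrable_toReal_rnDeriv (integrable_const _),
            Measure.integral_toReal_rnDeriv hμν]
          simp
  have h_min_le : ∫ x, min n (llr μ ν x) ∂μ ≤ ∫ x, f x ∂μ := by
    refine integral_mono_ae (integrable_min_llr hμν hn) hfμ ?_
    filter_upwards [Measure.rnDeriv_pos hμν, hμν.ae_le (μ.rnDeriv_lt_top ν)] with x hpos hlt
    exact min_log_le_truncLog n (ENNReal.toReal_pos hpos.ne' hlt.ne)
  have h_log := log_le_log (integral_exp_pos h_exp) hZ_le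
  exact (EReal.coe_le_coe_iff.2 (by linarith)).trans (le_relEnt hf hfC)

end RelativeEntropy

/-- If μ ≪ ν then H(μ|ν) = ∫ log(dμ/dν) dμ, interpreted as an extended real in
[0,∞] (it equals +∞ when the log-likelihood ratio is not μ-integrable). -/
theorem stmt_5 {Ω : Type*} [MeasurableSpace Ω] (μ ν : Measure Ω)
    [IsProbabilityMeasure μ] [IsProbabilityMeasure ν] (hμν : μ ≪ ν) :
    relEnt μ ν =
      if Integrable (MeasureTheory.llr μ ν) μ
        then ((∫ x, MeasureTheory.llr μ ν x ∂μ : ℝ) : EReal)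
        else (⊤ : EReal) := by
  refine le_antisymm ?_ ?_
  · split_ifs with h
    · exact relEnt_le_integral_llr hμν h
    · exact le_top
  · have h_exp : Tendsto (fun n : ℕ ↦ exp (-(n : ℝ))) atTop (𝓝 0) :=
      tendsto_exp_neg_atTop_nhds_zero.comp tendsto_natCast_atTop_atTop
    have h_log : Tendsto (fun n : ℕ ↦ log (1 + exp (-(n : ℝ)))) atTop (𝓝 0) := by
      simpa [Function.comp_def] using
        (continuousAt_log (by norm_num : (1 : ℝ) + 0 ≠ 0)).tendsto.comp
          (tendsto_const_nhds.add h_exp)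
    exact le_of_tendsto'
      (EReal.tendsto_coe_sub_of_tendsto_zero (tendsto_integral_min_llr hμν) h_log)
      fun n ↦ integral_min_llr_sub_le_relEnt hμν n.cast_nonneg
end
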